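/- Let m ≥ 2 and t_m > 0. For a ∈ L²(ℝ^{m−1} × ℝ^{m−1}) define α(a) ∈ L²(ℝ^m × ℝ^m) by (α(a))(x,ξ) = a(x',ξ') γ_{t_m/2}(x_m)^{1/2} γ_{1/(8t_m)}(ξ_m)^{1/2}, and for K ∈ L²(ℝ^{m−1} × ℝ^{m−1}) define η(K) ∈ L²(ℝ^m × ℝ^m) by (η(K))(x,y) = K(x',y') γ_{t_m}(x_m)^{1/2} γ_{t_m}(y_m)^{1/2}. Then η(T_{m−1}(a)) = T_m(α(a)) in L²(ℝ^m × ℝ^m), i.e. the middle square of the inductive diagram commutes. -/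

import Mathlib

/-!
Both sides of the square depend continuously on `a ∈ L²`, so it suffices to compare them on
simple functions, which lie in `L¹ ∩ L²`, where `T_m` and `T_{m-1}` are given by the Weyl integral.
Splitting `ξ = (ξ', ξ_m)`, the Weyl integral of `a(x', ξ') G(x_m, ξ_m)` factors as
`T_{m-1} a (x', y') · T_1 G (x_m, y_m)`. For `G = γ_{t/2}^{1/2} ⊗ γ_{1/(8t)}^{1/2}` the
one-dimensional factor is the Fourier transform of a Gaussian, and equals `γ_t^{1/2} ⊗ γ_t^{1/2}`.
-/

open MeasureTheory

noncomputable section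

/-- The density `γ_t(x) = (2πt)^{-1/2} e^{-x²/(2t)}` of the centered Gaussian
measure on `ℝ` with variance `t`. -/
def gauss (t x : ℝ) : ℝ :=
  (Real.sqrt (2 * Real.pi * t))⁻¹ * Real.exp (-(x ^ 2) / (2 * t))

/-- The Weyl symbol-to-kernel integral
`(2π)^{−m/2} ∫ a((x+y)/2, ξ) e^{i⟨x−y,ξ⟩} dξ` at `z = (x,y)`, for `ℝ^m = ι → ℝ`. -/
def weylIntegral {ι : Type} [Fintype ι]
    (a : ((ι → ℝ) × (ι → ℝ)) → ℂ) (z : (ι → ℝ) × (ι → ℝ)) : ℂ :=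
  (((2 * Real.pi) ^ (-(Fintype.card ι : ℝ) / 2) : ℝ) : ℂ) *
    ∫ ξ : ι → ℝ,
      a (fun j => (z.1 j + z.2 j) / 2, ξ) *
        Complex.exp (Complex.I * ((∑ j, (z.1 j - z.2 j) * ξ j : ℝ) : ℂ))

/-- `U` is the Weyl symbol-to-kernel unitary `T_m` on `L²(ℝ^m × ℝ^m)` (with `ℝ^m = ι → ℝ`):
it is characterized by acting via the Weyl integral formula on `L² ∩ L¹` symbols. -/
def IsWeylTransform {ι : Type} [Fintype ι]
    (U : Lp ℂ 2 (volume : Measure ((ι → ℝ) × (ι → ℝ))) ≃ₗᵢ[ℂ]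
         Lp ℂ 2 (volume : Measure ((ι → ℝ) × (ι → ℝ)))) : Prop :=
  ∀ (a : ((ι → ℝ) × (ι → ℝ)) → ℂ) (ha : MemLp a 2 volume),
    Integrable a volume →
      ∀ᵐ z ∂(volume : Measure ((ι → ℝ) × (ι → ℝ))),
        (U (ha.toLp a)) z = weylIntegral a z

open scoped ENNReal

namespace MeasureTheory

section Tensor

variable {α β : Type*} [MeasurableSpace α] [MeasurableSpace β] {μ : Measure α} {ν : Measure β}
  {p : ℝ≥0∞} {f : α → ℂ} {g : β → ℂ}

lemma eLpNorm_mul_prod [SFinite ν] (hf : AEStronglyMeasurable f μ)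
    (hg : AEStronglyMeasurable g ν) (hp : p ≠ ∞) :
    eLpNorm (fun z => f z.1 * g z.2) p (μ.prod ν) = eLpNorm f p μ * eLpNorm g p ν := by
  rcases eq_or_ne p 0 with rfl | hp₀
  · simp only [eLpNorm_exponent_zero, mul_zero]
  simp only [eLpNorm_eq_lintegral_rpow_enorm_toReal hp₀ hp, enorm_mul,
    ENNReal.mul_rpow_of_nonneg _ _ ENNReal.toReal_nonneg]
  rw [lintegral_prod_mul (hf.enorm.pow_const _) (hg.enorm.pow_const _),
    ENNReal.mul_rpow_of_nonneg _ _ (by positivity)]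

lemma MemLp.mul_prod [SFinite ν] (hf : MemLp f p μ) (hg : MemLp g p ν) (hp : p ≠ ∞) :
    MemLp (fun z => f z.1 * g z.2) p (μ.prod ν) :=
  ⟨hf.1.comp_fst.mul hg.1.comp_snd, by
    rw [eLpNorm_mul_prod hf.1 hg.1 hp]
    exact ENNReal.mul_lt_top hf.2 hg.2⟩

variable [SFinite ν] [Fact (1 ≤ p)]

def tensorLp (hp : p ≠ ∞) (g : β → ℂ) (hg : MemLp g p ν) :
    Lp ℂ p μ →L[ℂ] Lp ℂ p (μ.prod ν) :=
  LinearMap.mkContinuous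
    { toFun := fun f => ((Lp.memLp f).mul_prod hg hp).toLp _
      map_add' := fun f₁ f₂ => by
        rw [← MemLp.toLp_add, MemLp.toLp_eq_toLp_iff]
        filter_upwards [Measure.quasiMeasurePreserving_fst.ae_eq (Lp.coeFn_add f₁ f₂)] with z hz
        simp only [Function.comp_apply, Pi.add_apply] at hz ⊢
        rw [hz, add_mul]
      map_smul' := fun c f => by
        rw [← MemLp.toLp_const_smul, MemLp.toLp_eq_toLp_iff]
        filter_upwards [Measure.quasiMeasurePreserving_fst.ae_eq (Lp.coeFn_smul c f)] with z hz
        simp only [Function.comp_apply, Pi.smul_apply, smul_eq_mul, RingHom.id_apply] at hz ⊢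
        rw [hz, mul_assoc] }
    ‖hg.toLp g‖ fun f => by
      rw [LinearMap.coe_mk, AddHom.coe_mk, Lp.norm_toLp,
        eLpNorm_mul_prod (Lp.aestronglyMeasurable f) hg.1 hp,
        ENNReal.toReal_mul, Lp.norm_toLp, mul_comm, Lp.norm_def]

variable (hp : p ≠ ∞) (hg : MemLp g p ν)

lemma tensorLp_apply (f : Lp ℂ p μ) :
    tensorLp hp g hg f = ((Lp.memLp f).mul_prod hg hp).toLp _ :=
  rfl

lemma coeFn_tensorLp (f : Lp ℂ p μ) :
    tensorLp hp g hg f =ᵐ[μ.prod ν] fun z => f z.1 * g z.2 := by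
  rw [tensorLp_apply]
  exact MemLp.coeFn_toLp _

lemma tensorLp_toLp (hf : MemLp f p μ) :
    tensorLp hp g hg (hf.toLp f) = (hf.mul_prod hg hp).toLp _ := by
  rw [tensorLp_apply, MemLp.toLp_eq_toLp_iff]
  filter_upwards [Measure.quasiMeasurePreserving_fst.ae_eq hf.coeFn_toLp] with z hz
  simp only [Function.comp_apply] at hz
  rw [hz]

end Tensor

end MeasureTheory

section SplitLast

variable {α : Type*} [MeasureSpace α] [SigmaFinite (volume : Measure α)] (n : ℕ)

def splitLast (z : (Fin (n + 1) → α) × (Fin (n + 1) → α)) :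
    ((Fin n → α) × (Fin n → α)) × (α × α) :=
  ((z.1 ∘ Fin.castSucc, z.2 ∘ Fin.castSucc), (z.1 (Fin.last n), z.2 (Fin.last n)))

lemma measurePreserving_splitLast :
    MeasurePreserving (splitLast n (α := α)) volume volume := by
  have h := Measure.measurePreserving_swap.comp <|
    ((MeasurePreserving.id volume).prod
      (volume_measurePreserving_arrowProdEquivProdArrow α α (Fin n))).comp <|
    (volume_preserving_piFinSuccAbove (fun _ => α × α) (Fin.last n)).comp
      (volume_measurePreserving_arrowProdEquivProdArrow α α (Fin (n + 1))).symm
  convert h using 1 <;> try rfl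
  ext z <;> simp only [Function.comp_apply, MeasurableEquiv.piFinSuccAbove_apply,
    Fin.insertNthEquiv_last, Fin.snocEquiv_symm_apply, Prod.map_apply, id_eq,
    Prod.swap_prod_mk] <;> rfl

end SplitLast

section ExtendLast

variable {α : Type*} [MeasureSpace α] [SigmaFinite (volume : Measure α)] {G : α × α → ℂ}
  {n : ℕ}

variable (G) in
def extendLast (hG : MemLp G 2 volume) (n : ℕ) :
    Lp ℂ 2 (volume : Measure ((Fin n → α) × (Fin n → α))) →L[ℂ]
      Lp ℂ 2 (volume : Measure ((Fin (n + 1) → α) × (Fin (n + 1) → α))) :=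
  (Lp.compMeasurePreservingₗᵢ ℂ _ (measurePreserving_splitLast n)).toContinuousLinearMap.comp
    (tensorLp ENNReal.ofNat_ne_top G hG)

lemma coeFn_extendLast (hG : MemLp G 2 volume)
    (f : Lp ℂ 2 (volume : Measure ((Fin n → α) × (Fin n → α)))) :
    extendLast G hG n f =ᵐ[volume] fun z => f (splitLast n z).1 * G (splitLast n z).2 :=
  (Lp.coeFn_compMeasurePreserving _ _).trans <|
    (measurePreserving_splitLast n).quasiMeasurePreserving.ae_eq (coeFn_tensorLp _ hG f)

lemma memLp_comp_splitLast (hG : MemLp G 2 volume) {f : (Fin n → α) × (Fin n → α) → ℂ}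
    (hf : MemLp f 2 volume) :
    MemLp (fun z => f (splitLast n z).1 * G (splitLast n z).2) 2 volume :=
  (hf.mul_prod hG ENNReal.ofNat_ne_top).comp_measurePreserving
    (measurePreserving_splitLast n)

lemma integrable_comp_splitLast (hG : Integrable G) {f : (Fin n → α) × (Fin n → α) → ℂ}
    (hf : Integrable f) :
    Integrable (fun z => f (splitLast n z).1 * G (splitLast n z).2) volume :=
  (measurePreserving_splitLast n).integrable_comp_of_integrable (hf.mul_prod hG)

lemma extendLast_toLp (hG : MemLp G 2 volume) {f : (Fin n → α) × (Fin n → α) → ℂ}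
    (hf : MemLp f 2 volume) :
    extendLast G hG n (hf.toLp f) = (memLp_comp_splitLast hG hf).toLp _ := by
  rw [extendLast, ContinuousLinearMap.comp_apply, tensorLp_toLp]
  exact Lp.toLp_compMeasurePreserving _ _

end ExtendLast

section WeylFactor

open Complex

/-- The one-dimensional case of `weylIntegral`, with `ℝ` in place of `Unit → ℝ`. -/
def weylIntegral₁ (G : ℝ × ℝ → ℂ) (p : ℝ × ℝ) : ℂ :=
  (((2 * Real.pi) ^ (-(1 : ℝ) / 2) : ℝ) : ℂ) *
    ∫ u : ℝ, G ((p.1 + p.2) / 2, u) * exp (I * (((p.1 - p.2) * u : ℝ) : ℂ))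

lemma weylIntegral_comp_splitLast {n : ℕ} (h : (Fin n → ℝ) × (Fin n → ℝ) → ℂ)
    (G : ℝ × ℝ → ℂ) (z : (Fin (n + 1) → ℝ) × (Fin (n + 1) → ℝ)) :
    weylIntegral (fun w => h (splitLast n w).1 * G (splitLast n w).2) z =
      weylIntegral h (splitLast n z).1 * weylIntegral₁ G (splitLast n z).2 := by
  have hconst : ((2 * Real.pi) ^ (-((n + 1 : ℕ) : ℝ) / 2) : ℝ) =
      (2 * Real.pi) ^ (-(n : ℝ) / 2) * (2 * Real.pi) ^ (-(1 : ℝ) / 2) := by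
    rw [← Real.rpow_add (by positivity)]
    push_cast
    ring_nf
  unfold weylIntegral weylIntegral₁
  set F := fun u : ℝ => G (((splitLast n z).2.1 + (splitLast n z).2.2) / 2, u) *
    exp (I * ((((splitLast n z).2.1 - (splitLast n z).2.2) * u : ℝ) : ℂ))
  set H := fun ξ : Fin n → ℝ =>
    h (fun j => ((splitLast n z).1.1 j + (splitLast n z).1.2 j) / 2, ξ) *
      exp (I * ((∑ j, ((splitLast n z).1.1 j - (splitLast n z).1.2 j) * ξ j : ℝ) : ℂ))
  set e := MeasurableEquiv.piFinSuccAbove (fun _ : Fin (n + 1) => ℝ) (Fin.last n)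
  have hsplit : ∀ p : ℝ × (Fin n → ℝ),
      h (splitLast n (fun j => (z.1 j + z.2 j) / 2, e.symm p)).1 *
          G (splitLast n (fun j => (z.1 j + z.2 j) / 2, e.symm p)).2 *
        exp (I * ((∑ j, (z.1 j - z.2 j) * e.symm p j : ℝ) : ℂ)) = F p.1 * H p.2 := by
    intro p
    simp only [F, H, e, splitLast, Function.comp_def, MeasurableEquiv.piFinSuccAbove_symm_apply,
      Fin.insertNthEquiv_last, Fin.snocEquiv_apply, Fin.snoc_castSucc, Fin.snoc_last,
      Fin.sum_univ_castSucc, ofReal_add, ofReal_sum, mul_add, exp_add]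
    ring
  rw [Fintype.card_fin, Fintype.card_fin, hconst, ofReal_mul,
    ← (volume_preserving_piFinSuccAbove (fun _ => ℝ) (Fin.last n)).symm.integral_comp',
    integral_congr_ae (.of_forall hsplit), Measure.volume_eq_prod, integral_prod_mul]
  ring

theorem IsWeylTransform.comp_extendLast {n : ℕ}
    {Un : Lp ℂ 2 (volume : Measure ((Fin n → ℝ) × (Fin n → ℝ))) ≃ₗᵢ[ℂ]
      Lp ℂ 2 (volume : Measure ((Fin n → ℝ) × (Fin n → ℝ)))}
    {Um : Lp ℂ 2 (volume : Measure ((Fin (n + 1) → ℝ) × (Fin (n + 1) → ℝ))) ≃ₗᵢ[ℂ]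
      Lp ℂ 2 (volume : Measure ((Fin (n + 1) → ℝ) × (Fin (n + 1) → ℝ)))}
    (hUn : IsWeylTransform Un) (hUm : IsWeylTransform Um) {G₁ G₂ : ℝ × ℝ → ℂ}
    (hG₁ : MemLp G₁ 2 volume) (hG₁' : Integrable G₁) (hG₂ : MemLp G₂ 2 volume)
    (hweyl : weylIntegral₁ G₁ = G₂) :
    ⇑Um ∘ extendLast G₁ hG₁ n = extendLast G₂ hG₂ n ∘ ⇑Un := by
  refine (Lp.simpleFunc.denseRange (p := 2) ENNReal.ofNat_ne_top).equalizer
    (Um.continuous.comp (extendLast G₁ hG₁ n).continuous)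
    ((extendLast G₂ hG₂ n).continuous.comp Un.continuous) (funext fun g => ?_)
  set f := Lp.simpleFunc.toSimpleFunc g
  have hf : MemLp f 2 volume := Lp.simpleFunc.memLp g
  have hf' : Integrable f :=
    (SimpleFunc.memLp_iff_integrable two_ne_zero ENNReal.ofNat_ne_top).1 hf
  have hfg : (g : Lp ℂ 2 volume) = hf.toLp f := by
    rw [← Lp.simpleFunc.toLp_toSimpleFunc g, Lp.simpleFunc.toLp_eq_toLp]
  have hproj :
      Measure.QuasiMeasurePreserving (fun z => (splitLast (α := ℝ) n z).1) volume volume :=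
    Measure.quasiMeasurePreserving_fst.comp (measurePreserving_splitLast n).quasiMeasurePreserving
  simp only [Function.comp_apply, hfg, extendLast_toLp]
  refine Lp.ext ?_
  filter_upwards [hUm _ (memLp_comp_splitLast hG₁ hf) (integrable_comp_splitLast hG₁' hf'),
    coeFn_extendLast hG₂ (Un (hf.toLp f)), hproj.ae (hUn f hf hf')] with z hUmz hextz hUnz
  rw [hUmz, hextz, weylIntegral_comp_splitLast, hUnz, hweyl]

end WeylFactor

section Gaussian

open Real

lemma gauss_eq_gaussianPDFReal {s : ℝ} (hs : 0 < s) :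
    gauss s = ProbabilityTheory.gaussianPDFReal 0 s.toNNReal := by
  ext x
  simp [gauss, ProbabilityTheory.gaussianPDFReal, hs.le]

lemma sqrt_gauss {s : ℝ} (hs : 0 < s) (x : ℝ) :
    √(gauss s x) = (2 * π * s) ^ (-(1 / 4 : ℝ)) * exp (-(1 / (4 * s)) * x ^ 2) := by
  rw [gauss, sqrt_mul (by positivity), sqrt_inv, sqrt_eq_rpow, sqrt_eq_rpow,
    ← rpow_mul (by positivity), ← rpow_neg (by positivity), ← exp_half]
  congr 2 <;> ring

def sqrtGauss (s x : ℝ) : ℂ := √(gauss s x)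

lemma sqrtGauss_eq {s : ℝ} (hs : 0 < s) (x : ℝ) :
    sqrtGauss s x =
      ((2 * π * s) ^ (-(1 / 4 : ℝ)) : ℝ) * Complex.exp (-(1 / (4 * s) : ℝ) * x ^ 2) := by
  rw [sqrtGauss, sqrt_gauss hs]
  push_cast
  rfl

lemma integrable_sqrtGauss {s : ℝ} (hs : 0 < s) : Integrable (sqrtGauss s) := by
  refine (((integrable_exp_neg_mul_sq (b := 1 / (4 * s)) (by positivity)).const_mul
    ((2 * π * s) ^ (-(1 / 4 : ℝ)))).ofReal).congr (.of_forall fun x => ?_)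
  simp only [sqrtGauss, sqrt_gauss hs]
  rfl

lemma memLp_sqrtGauss {s : ℝ} (hs : 0 < s) : MemLp (sqrtGauss s) 2 volume := by
  refine (memLp_two_iff_integrable_sq_norm (integrable_sqrtGauss hs).1).2 ?_
  have hsq (x : ℝ) : ‖sqrtGauss s x‖ ^ 2 = gauss s x := by
    rw [sqrtGauss, Complex.norm_real, norm_of_nonneg (sqrt_nonneg _), sq_sqrt]
    rw [gauss_eq_gaussianPDFReal hs]
    exact ProbabilityTheory.gaussianPDFReal_nonneg _ _ _
  simp_rw [hsq, gauss_eq_gaussianPDFReal hs]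
  exact ProbabilityTheory.integrable_gaussianPDFReal _ _

def sqrtGauss₂ (s₁ s₂ : ℝ) (q : ℝ × ℝ) : ℂ := sqrtGauss s₁ q.1 * sqrtGauss s₂ q.2

lemma memLp_sqrtGauss₂ {s₁ s₂ : ℝ} (hs₁ : 0 < s₁) (hs₂ : 0 < s₂) :
    MemLp (sqrtGauss₂ s₁ s₂) 2 volume :=
  (memLp_sqrtGauss hs₁).mul_prod (memLp_sqrtGauss hs₂) ENNReal.ofNat_ne_top

lemma integrable_sqrtGauss₂ {s₁ s₂ : ℝ} (hs₁ : 0 < s₁) (hs₂ : 0 < s₂) :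
    Integrable (sqrtGauss₂ s₁ s₂) :=
  (integrable_sqrtGauss hs₁).mul_prod (integrable_sqrtGauss hs₂)

end Gaussian

section GaussianWeyl

open Real

lemma integral_sqrtGauss_mul_exp {s : ℝ} (hs : 0 < s) (c : ℝ) :
    ∫ u : ℝ, sqrtGauss s u * Complex.exp (Complex.I * ((c * u : ℝ) : ℂ)) =
      (((2 * π * s) ^ (-(1 / 4 : ℝ)) * (4 * π * s) ^ (1 / 2 : ℝ) * exp (-s * c ^ 2) : ℝ) :
        ℂ) := by
  have hintegrand (u : ℝ) : sqrtGauss s u * Complex.exp (Complex.I * ((c * u : ℝ) : ℂ)) =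
      ((2 * π * s) ^ (-(1 / 4 : ℝ)) : ℝ) *
        (Complex.exp (Complex.I * c * u) * Complex.exp (-(1 / (4 * s) : ℝ) * u ^ 2)) := by
    rw [sqrtGauss_eq hs]
    push_cast
    rw [mul_assoc Complex.I]
    ring
  have hb : 0 < ((1 / (4 * s) : ℝ) : ℂ).re := by simpa using hs
  rw [integral_congr_ae (.of_forall hintegrand), integral_const_mul, fourierIntegral_gaussian hb,
    show (π : ℂ) / (1 / (4 * s) : ℝ) = (4 * π * s : ℝ) by push_cast; field_simp,
    show (1 / 2 : ℂ) = (1 / 2 : ℝ) by push_cast; rfl, ← Complex.ofReal_cpow (by positivity)]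
  push_cast
  field_simp

lemma sqrt_gauss_mul_sqrt_gauss {t : ℝ} (ht : 0 < t) (x y : ℝ) :
    (2 * π) ^ (-1 / 2 : ℝ) * √(gauss (t / 2) ((x + y) / 2)) *
        ((2 * π * (1 / (8 * t))) ^ (-(1 / 4 : ℝ)) * (4 * π * (1 / (8 * t))) ^ (1 / 2 : ℝ) *
          exp (-(1 / (8 * t)) * (x - y) ^ 2)) =
      √(gauss t x) * √(gauss t y) := by
  have hconst : (2 * π) ^ (-1 / 2 : ℝ) * (2 * π * (t / 2)) ^ (-(1 / 4 : ℝ)) *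
      (2 * π * (1 / (8 * t))) ^ (-(1 / 4 : ℝ)) * (4 * π * (1 / (8 * t))) ^ (1 / 2 : ℝ) =
      (2 * π * t) ^ (-(1 / 4 : ℝ)) * (2 * π * t) ^ (-(1 / 4 : ℝ)) := by
    simp (disch := positivity) only [rpow_def_of_pos, ← exp_add]
    congr 1
    rw [show 2 * π * (t / 2) = π * t by ring,
      show 2 * π * (1 / (8 * t)) = π / (2 ^ 2 * t) by field_simp; norm_num,
      show 4 * π * (1 / (8 * t)) = π / (2 * t) by field_simp; norm_num]
    simp (disch := positivity) only [log_mul, log_div, log_pow]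
    ring
  have hexponent : -(1 / (4 * (t / 2))) * ((x + y) / 2) ^ 2 + -(1 / (8 * t)) * (x - y) ^ 2 =
      -(1 / (4 * t)) * x ^ 2 + -(1 / (4 * t)) * y ^ 2 := by
    field_simp
    ring
  rw [sqrt_gauss (half_pos ht), sqrt_gauss ht, sqrt_gauss ht]
  calc _ = ((2 * π) ^ (-1 / 2 : ℝ) * (2 * π * (t / 2)) ^ (-(1 / 4 : ℝ)) *
        (2 * π * (1 / (8 * t))) ^ (-(1 / 4 : ℝ)) * (4 * π * (1 / (8 * t))) ^ (1 / 2 : ℝ)) *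
        exp (-(1 / (4 * (t / 2))) * ((x + y) / 2) ^ 2 + -(1 / (8 * t)) * (x - y) ^ 2) := by
        rw [exp_add]; ring
    _ = _ := by
      rw [hconst, hexponent, exp_add]
      ring

lemma weylIntegral₁_sqrtGauss₂ {t : ℝ} (ht : 0 < t) :
    weylIntegral₁ (sqrtGauss₂ (t / 2) (1 / (8 * t))) = sqrtGauss₂ t t := by
  ext ⟨x, y⟩
  simp only [weylIntegral₁, sqrtGauss₂, mul_assoc, integral_const_mul]
  rw [integral_sqrtGauss_mul_exp (by positivity)]
  simp only [sqrtGauss, ← mul_assoc]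
  exact_mod_cast sqrt_gauss_mul_sqrt_gauss ht x y

end GaussianWeyl

theorem weyl_middle_square_general (n : ℕ) (t : ℝ) (ht : 0 < t)
    (Un : Lp ℂ 2 (volume : Measure ((Fin n → ℝ) × (Fin n → ℝ))) ≃ₗᵢ[ℂ]
          Lp ℂ 2 (volume : Measure ((Fin n → ℝ) × (Fin n → ℝ))))
    (hUn : IsWeylTransform Un)
    (Um : Lp ℂ 2 (volume : Measure ((Fin (n + 1) → ℝ) × (Fin (n + 1) → ℝ))) ≃ₗᵢ[ℂ]
          Lp ℂ 2 (volume : Measure ((Fin (n + 1) → ℝ) × (Fin (n + 1) → ℝ))))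
    (hUm : IsWeylTransform Um)
    (a : Lp ℂ 2 (volume : Measure ((Fin n → ℝ) × (Fin n → ℝ))))
    (b : Lp ℂ 2 (volume : Measure ((Fin (n + 1) → ℝ) × (Fin (n + 1) → ℝ))))
    (hb : ∀ᵐ z ∂(volume : Measure ((Fin (n + 1) → ℝ) × (Fin (n + 1) → ℝ))),
      b z = a (z.1 ∘ Fin.castSucc, z.2 ∘ Fin.castSucc) *
        (Real.sqrt (gauss (t / 2) (z.1 (Fin.last n))) : ℂ) *
        (Real.sqrt (gauss (1 / (8 * t)) (z.2 (Fin.last n))) : ℂ)) :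
    ∀ᵐ z ∂(volume : Measure ((Fin (n + 1) → ℝ) × (Fin (n + 1) → ℝ))),
      (Um b) z = (Un a) (z.1 ∘ Fin.castSucc, z.2 ∘ Fin.castSucc) *
        (Real.sqrt (gauss t (z.1 (Fin.last n))) : ℂ) *
        (Real.sqrt (gauss t (z.2 (Fin.last n))) : ℂ) := by
  have ht₂ : 0 < t / 2 := by positivity
  have ht₈ : 0 < 1 / (8 * t) := by positivity
  have hα := memLp_sqrtGauss₂ ht₂ ht₈
  have hη := memLp_sqrtGauss₂ ht ht
  have hb_eq : b = extendLast _ hα n a := by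
    refine Lp.ext ?_
    filter_upwards [hb, coeFn_extendLast hα a] with z hbz hαz
    rw [hbz, hαz, sqrtGauss₂, sqrtGauss, sqrtGauss, mul_assoc]
    rfl
  have hsquare := congrFun (hUn.comp_extendLast hUm hα (integrable_sqrtGauss₂ ht₂ ht₈) hη
    (weylIntegral₁_sqrtGauss₂ ht)) a
  filter_upwards [coeFn_extendLast hη (Un a)] with z hηz
  rw [hb_eq, ← Function.comp_apply (f := Um), hsquare, Function.comp_apply, hηz, sqrtGauss₂,
    sqrtGauss, sqrtGauss, mul_assoc]
  rfl

/-- The middle square of the inductive diagram commutes: with `m = n+1 ≥ 2`, `t = t_m > 0`,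
`α(a)(x,ξ) = a(x',ξ') γ_{t/2}(x_m)^{1/2} γ_{1/(8t)}(ξ_m)^{1/2}` and
`η(K)(x,y) = K(x',y') γ_t(x_m)^{1/2} γ_t(y_m)^{1/2}`, one has
`η(T_{m−1}(a)) = T_m(α(a))` in `L²(ℝ^m × ℝ^m)`.  Here `b` is (the `L²`-class of) `α(a)`. -/
theorem weyl_middle_square (n : ℕ) (hn : 1 ≤ n) (t : ℝ) (ht : 0 < t)
    (Un : Lp ℂ 2 (volume : Measure ((Fin n → ℝ) × (Fin n → ℝ))) ≃ₗᵢ[ℂ]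
          Lp ℂ 2 (volume : Measure ((Fin n → ℝ) × (Fin n → ℝ))))
    (hUn : IsWeylTransform Un)
    (Um : Lp ℂ 2 (volume : Measure ((Fin (n + 1) → ℝ) × (Fin (n + 1) → ℝ))) ≃ₗᵢ[ℂ]
          Lp ℂ 2 (volume : Measure ((Fin (n + 1) → ℝ) × (Fin (n + 1) → ℝ))))
    (hUm : IsWeylTransform Um)
    (a : Lp ℂ 2 (volume : Measure ((Fin n → ℝ) × (Fin n → ℝ))))
    (b : Lp ℂ 2 (volume : Measure ((Fin (n + 1) → ℝ) × (Fin (n + 1) → ℝ))))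
    (hb : ∀ᵐ z ∂(volume : Measure ((Fin (n + 1) → ℝ) × (Fin (n + 1) → ℝ))),
      b z = a (z.1 ∘ Fin.castSucc, z.2 ∘ Fin.castSucc) *
        (Real.sqrt (gauss (t / 2) (z.1 (Fin.last n))) : ℂ) *
        (Real.sqrt (gauss (1 / (8 * t)) (z.2 (Fin.last n))) : ℂ)) :
    ∀ᵐ z ∂(volume : Measure ((Fin (n + 1) → ℝ) × (Fin (n + 1) → ℝ))),
      (Um b) z = (Un a) (z.1 ∘ Fin.castSucc, z.2 ∘ Fin.castSucc) *
        (Real.sqrt (gauss t (z.1 (Fin.last n))) : ℂ) *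
        (Real.sqrt (gauss t (z.2 (Fin.last n))) : ℂ) :=
  weyl_middle_square_general n t ht Un hUn Um hUm a b hb
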